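/- arXiv:1310.2959 — 2 statements merged into one kernel-verified Lean document; each statement's English description precedes it below -/
import Mathlib

section
/- (Skewed-vector count-min bound; cf. Lemma of Cormode–Muthukrishnan, Eqn 5.1.) Fix positive integers n, w, d, a probability space Ω, and random hash functions h_1, …, h_d : Ω → (Fin n → Fin w) that are mutually independent, each pairwise uniform in the sense that for all distinct i, i', P(h_j(i) = h_j(i')) ≤ 1/w. Let y ∈ ℝ^n have nonnegative entries, let T ⊆ Fin n be a set of at most k coordinates containing the k largest entries of y, and let t_k = Σ_{i' ∉ T} y_{i'} be the tail weight. Let η > 0, and let ŷ_i = min_{1 ≤ j ≤ d} S(y)_{j, h_j(i)} be the count-min estimate of coordinate i. If w ≥ 3k and w ≥ e/η, then for each coordinate i, P( ŷ_i ≤ y_i + η·t_k ) ≥ 1 − (1/3 + 1/e)^d. -/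
/-!
Fix a row `h_j`. Its bucket containing `i` can exceed `y_i + η t_k` only if some other
coordinate of `T` lands in it, which by a union bound has probability at most `k / w ≤ 1/3`,
or if the colliding coordinates outside `T` weigh more than `η t_k`; their expected weight is at
most `t_k / w`, so by Markov's inequality this has probability at most `1 / (w η) ≤ 1/e`.
The estimate `ŷ_i` fails only if every row fails, and the rows are independent.
-/

open Finset MeasureTheory ProbabilityTheory

/-- The count-min sketch of width `w` and depth `d` for `y : Fin n → ℝ`. -/
noncomputable def cmSketch {n w d : ℕ} (h : Fin d → Fin n → Fin w)
    (y : Fin n → ℝ) (j : Fin d) (c : Fin w) : ℝ :=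
  ∑ i ∈ Finset.univ.filter (fun i => h j i = c), y i

/-- The count-min estimate of coordinate `i`: `ŷ_i = min_j S(y)_{j, h j i}`. -/
noncomputable def cmEstimate {n w d : ℕ} (hd : 0 < d) (h : Fin d → Fin n → Fin w)
    (y : Fin n → ℝ) (i : Fin n) : ℝ :=
  Finset.univ.inf' ⟨⟨0, hd⟩, Finset.mem_univ _⟩ (fun j => cmSketch h y j (h j i))

open scoped ENNReal

section Markov

variable {Ω : Type*} [MeasurableSpace Ω] {μ : Measure Ω}

theorem measure_lt_le_of_lintegral_le_mul {f : Ω → ℝ≥0∞} (hf : AEMeasurable f μ)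
    {ε c : ℝ≥0∞} (hε : ε ≠ ∞) (h : ∫⁻ ω, f ω ∂μ ≤ c * ε) : μ {ω | ε < f ω} ≤ c := by
  rcases eq_or_ne ε 0 with rfl | hε₀
  · have hf₀ : f =ᵐ[μ] 0 := (lintegral_eq_zero_iff' hf).mp (by simpa using h)
    have hnull : μ {ω | 0 < f ω} = 0 := measure_mono_null (fun ω hω => ne_of_gt hω) hf₀
    simp [hnull]
  calc μ {ω | ε < f ω} ≤ μ {ω | ε ≤ f ω} := measure_mono fun _ hω => le_of_lt (α := ℝ≥0∞) hω
    _ ≤ (∫⁻ ω, f ω ∂μ) / ε := meas_ge_le_lintegral_div hf hε₀ hε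
    _ ≤ c * ε / ε := by gcongr
    _ = c := ENNReal.mul_div_cancel_right hε₀ hε

theorem lintegral_ofReal_sum_indicator_le {ι : Type*} {s : Finset ι} {E : ι → Set Ω}
    (hE : ∀ i ∈ s, MeasurableSet (E i)) {p : ℝ≥0∞} (hp : ∀ i ∈ s, μ (E i) ≤ p)
    {c : ι → ℝ} (hc : ∀ i ∈ s, 0 ≤ c i) :
    ∫⁻ ω, ENNReal.ofReal (∑ i ∈ s, (E i).indicator (fun _ => c i) ω) ∂μ
      ≤ p * ENNReal.ofReal (∑ i ∈ s, c i) := by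
  have hsum : ∀ ω, ENNReal.ofReal (∑ i ∈ s, (E i).indicator (fun _ => c i) ω)
      = ∑ i ∈ s, (E i).indicator (fun _ => ENNReal.ofReal (c i)) ω := fun ω => by
    rw [ENNReal.ofReal_sum_of_nonneg fun i hi => Set.indicator_nonneg (fun _ _ => hc i hi) ω]
    refine Finset.sum_congr rfl fun i _ => ?_
    exact (congrFun (Set.indicator_comp_of_zero (s := E i) (f := fun _ => c i)
      ENNReal.ofReal_zero) ω).symm
  calc ∫⁻ ω, ENNReal.ofReal (∑ i ∈ s, (E i).indicator (fun _ => c i) ω) ∂μ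
      = ∑ i ∈ s, ENNReal.ofReal (c i) * μ (E i) := by
        simp_rw [hsum]
        rw [lintegral_finsetSum' _ fun i hi =>
          (measurable_const.indicator (hE i hi)).aemeasurable]
        exact Finset.sum_congr rfl fun i hi => lintegral_indicator_const (hE i hi) _
    _ ≤ ∑ i ∈ s, ENNReal.ofReal (c i) * p := by gcongr with i hi; exact hp i hi
    _ = p * ENNReal.ofReal (∑ i ∈ s, c i) := by
        rw [← Finset.sum_mul, mul_comm, ENNReal.ofReal_sum_of_nonneg hc]

end Markov

section Bucket

variable {ι κ : Type*} [Fintype ι] [DecidableEq ι] [DecidableEq κ]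
  {Ω : Type*} [MeasurableSpace Ω] {μ : Measure Ω}

noncomputable def bucketWeight (g : ι → κ) (y : ι → ℝ) (i : ι) : ℝ :=
  ∑ i' ∈ univ.filter (fun i' => g i' = g i), y i'

theorem bucketWeight_eq_add_of_forall_ne {g : ι → κ} (y : ι → ℝ) {i : ι} {T : Finset ι}
    (hT : ∀ i' ∈ T, i' ≠ i → g i' ≠ g i) :
    bucketWeight g y i = y i + ∑ i' ∈ Tᶜ.erase i, if g i' = g i then y i' else 0 := by
  have hbucket : univ.filter (fun i' => g i' = g i)
      = insert i ((Tᶜ.erase i).filter fun i' => g i' = g i) := by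
    ext i'
    by_cases hi' : i' = i
    · simp [hi']
    · have := hT i'
      simp only [mem_filter, mem_univ, true_and, mem_insert, hi', false_or, mem_erase, ne_eq,
        not_false_eq_true, mem_compl]
      tauto
  rw [bucketWeight, hbucket, sum_insert (by simp), sum_filter]

variable [MeasurableSpace κ] [MeasurableEq κ]

theorem measure_lt_bucketWeight_le {f : Ω → ι → κ} (hf : Measurable f) {i : ι} {p : ℝ≥0∞}
    (hp : ∀ i', i' ≠ i → μ {ω | f ω i' = f ω i} ≤ p) {y : ι → ℝ} (hy : ∀ i, 0 ≤ y i)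
    (T : Finset ι) {η : ℝ} (hη : 0 < η) :
    μ {ω | y i + η * ∑ i' ∈ Tᶜ, y i' < bucketWeight (f ω) y i}
      ≤ #T * p + p / ENNReal.ofReal η := by
  set E : ι → Set Ω := fun i' => {ω | f ω i' = f ω i}
  have hE : ∀ i', MeasurableSet (E i') := fun i' =>
    measurableSet_eq_fun ((measurable_pi_apply i').comp hf) ((measurable_pi_apply i).comp hf)
  set tk := ∑ i' ∈ Tᶜ, y i'
  set tail : Ω → ℝ := fun ω => ∑ i' ∈ Tᶜ.erase i, (E i').indicator (fun _ => y i') ω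
  have hsplit : {ω | y i + η * tk < bucketWeight (f ω) y i}
      ⊆ (⋃ i' ∈ T.erase i, E i') ∪
          {ω | ENNReal.ofReal (η * tk) < ENNReal.ofReal (tail ω)} := by
    intro ω hω
    rw [Set.mem_union, or_iff_not_imp_left]
    intro hheavy
    have hne : ∀ i' ∈ T, i' ≠ i → f ω i' ≠ f ω i := fun i' hi' hne hcol =>
      hheavy (Set.mem_biUnion (mem_erase.mpr ⟨hne, hi'⟩) hcol)
    have htail : bucketWeight (f ω) y i = y i + tail ω := by
      simp only [bucketWeight_eq_add_of_forall_ne y hne, tail, E, Set.indicator_apply,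
        Set.mem_ofPred_eq]
    have hηtk : 0 ≤ η * tk := mul_nonneg hη.le (sum_nonneg fun i' _ => hy i')
    rw [Set.mem_ofPred_eq, ENNReal.ofReal_lt_ofReal_iff_of_nonneg hηtk]
    linarith [Set.mem_ofPred_eq ▸ hω]
  have hheavy : μ (⋃ i' ∈ T.erase i, E i') ≤ #T * p :=
    calc μ (⋃ i' ∈ T.erase i, E i') ≤ ∑ i' ∈ T.erase i, μ (E i') :=
          measure_biUnion_finset_le _ _
      _ ≤ #(T.erase i) • p :=
          sum_le_card_nsmul (T.erase i) _ _ fun i' hi' => hp i' (ne_of_mem_erase hi')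
      _ ≤ #T * p := by rw [nsmul_eq_mul]; gcongr; exact erase_subset i T
  have hlight : μ {ω | ENNReal.ofReal (η * tk) < ENNReal.ofReal (tail ω)}
      ≤ p / ENNReal.ofReal η := by
    refine measure_lt_le_of_lintegral_le_mul ?_ ENNReal.ofReal_ne_top ?_
    · exact (Finset.measurable_sum _ fun i' _ =>
        measurable_const.indicator (hE i')).ennreal_ofReal.aemeasurable
    calc ∫⁻ ω, ENNReal.ofReal (tail ω) ∂μ ≤ p * ENNReal.ofReal (∑ i' ∈ Tᶜ.erase i, y i') :=
          lintegral_ofReal_sum_indicator_le (fun i' _ => hE i')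
            (fun i' hi' => hp i' (ne_of_mem_erase hi')) fun i' _ => hy i'
      _ ≤ p * ENNReal.ofReal tk := by
          gcongr
          exact sum_le_sum_of_subset_of_nonneg (erase_subset i _) fun i' _ _ => hy i'
      _ = p / ENNReal.ofReal η * ENNReal.ofReal (η * tk) := by
          rw [ENNReal.ofReal_mul hη.le, ← mul_assoc, ENNReal.div_mul_cancel
            (ENNReal.ofReal_pos.mpr hη).ne' ENNReal.ofReal_ne_top]
  calc μ {ω | y i + η * tk < bucketWeight (f ω) y i}
      ≤ μ (⋃ i' ∈ T.erase i, E i') +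
          μ {ω | ENNReal.ofReal (η * tk) < ENNReal.ofReal (tail ω)} :=
        (measure_mono hsplit).trans (measure_union_le _ _)
    _ ≤ #T * p + p / ENNReal.ofReal η := add_le_add hheavy hlight

end Bucket

theorem ProbabilityTheory.iIndepFun.measure_iInter_preimage_le_pow {Ω ι β : Type*}
    [MeasurableSpace Ω] {μ : Measure Ω} [Fintype ι] [MeasurableSpace β] {X : ι → Ω → β}
    (hX : iIndepFun X μ) {A : Set β} (hA : MeasurableSet A) {q : ℝ≥0∞}
    (hq : ∀ j, μ (X j ⁻¹' A) ≤ q) :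
    μ (⋂ j, X j ⁻¹' A) ≤ q ^ Fintype.card ι := by
  have hprod := iIndepFun_iff_measure_inter_preimage_eq_mul.mp hX univ (sets := fun _ => A)
    fun _ _ => hA
  simp only [mem_univ, Set.iInter_true] at hprod
  rw [hprod]
  exact prod_le_pow_card _ _ _ fun j _ => hq j

theorem cmEstimate_le_iff {n w d : ℕ} (hd : 0 < d) (h : Fin d → Fin n → Fin w) (y : Fin n → ℝ)
    (i : Fin n) (v : ℝ) : cmEstimate hd h y i ≤ v ↔ ∃ j, bucketWeight (h j) y i ≤ v := by
  refine (inf'_le_iff _).trans ?_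
  simp only [mem_univ, true_and]
  rfl

theorem div_add_inv_mul_le_third_add_inv_exp {w k : ℕ} {η : ℝ} (hη : 0 < η) (hw3k : 3 * k ≤ w)
    (hwη : Real.exp 1 / η ≤ w) :
    (k : ℝ≥0∞) * (1 / w) + 1 / w / ENNReal.ofReal η
      ≤ ENNReal.ofReal (1 / 3 + 1 / Real.exp 1) := by
  have hw : (0 : ℝ) < w := (div_pos (Real.exp_pos 1) hη).trans_le hwη
  have hk : (k : ℝ≥0∞) * (1 / w) = ENNReal.ofReal (k / w) := by
    rw [ENNReal.ofReal_div_of_pos hw, ENNReal.ofReal_natCast, ENNReal.ofReal_natCast, mul_one_div]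
  have hη' : 1 / w / ENNReal.ofReal η = ENNReal.ofReal (1 / w / η) := by
    rw [ENNReal.ofReal_div_of_pos hη, ENNReal.ofReal_div_of_pos hw, ENNReal.ofReal_one,
      ENNReal.ofReal_natCast]
  rw [hk, hη', ← ENNReal.ofReal_add (by positivity) (by positivity)]
  refine ENNReal.ofReal_le_ofReal (add_le_add ?_ ?_)
  · rw [div_le_div_iff₀ hw three_pos]
    have : (3 * k : ℝ) ≤ w := by exact_mod_cast hw3k
    linarith
  · rw [div_div]
    exact one_div_le_one_div_of_le (Real.exp_pos 1) (by rwa [div_le_iff₀ hη] at hwη)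

theorem cm_skewed_bound_general
    (n w d : ℕ) (hd : 0 < d)
    {Ω : Type*} [MeasureSpace Ω] [IsProbabilityMeasure (ℙ : Measure Ω)]
    (h : Fin d → Ω → Fin n → Fin w) (hmeas : ∀ j, Measurable (h j))
    (hindep : iIndepFun h ℙ)
    (hpair : ∀ (j : Fin d) (i i' : Fin n), i ≠ i' →
        ℙ {ω | h j ω i = h j ω i'} ≤ 1 / w)
    (y : Fin n → ℝ) (hy : ∀ i, 0 ≤ y i)
    (k : ℕ) (T : Finset (Fin n)) (hTcard : T.card ≤ k)
    (η : ℝ) (hη : 0 < η)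
    (hw3k : 3 * k ≤ w) (hwη : Real.exp 1 / η ≤ w) (i : Fin n) :
    1 - ENNReal.ofReal ((1 / 3 + 1 / Real.exp 1) ^ d) ≤
      ℙ {ω | cmEstimate hd (fun j => h j ω) y i
              ≤ y i + η * ∑ i' ∈ Finset.univ.filter (fun i' => i' ∉ T), y i'} := by
  rw [filter_notMem_eq_sdiff, ← compl_eq_univ_sdiff]
  set A : Set (Fin n → Fin w) := {g | y i + η * ∑ i' ∈ Tᶜ, y i' < bucketWeight g y i}
  have hrow : ∀ j, ℙ (h j ⁻¹' A) ≤ ENNReal.ofReal (1 / 3 + 1 / Real.exp 1) := fun j =>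
    calc ℙ (h j ⁻¹' A) ≤ #T * (1 / w) + 1 / w / ENNReal.ofReal η :=
          measure_lt_bucketWeight_le (hmeas j) (fun i' hi' => hpair j i' i hi') hy T hη
      _ ≤ k * (1 / w) + 1 / w / ENNReal.ofReal η := by gcongr
      _ ≤ ENNReal.ofReal (1 / 3 + 1 / Real.exp 1) :=
          div_add_inv_mul_le_third_add_inv_exp hη hw3k hwη
  have hgood : {ω | cmEstimate hd (fun j => h j ω) y i ≤ y i + η * ∑ i' ∈ Tᶜ, y i'}
      = (⋂ j, h j ⁻¹' A)ᶜ := by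
    ext ω
    simp [cmEstimate_le_iff, A]
  have hbad := hindep.measure_iInter_preimage_le_pow .of_discrete hrow
  rw [Fintype.card_fin, ← ENNReal.ofReal_pow (by positivity)] at hbad
  rw [hgood, prob_compl_eq_one_sub (.iInter fun j => hmeas j .of_discrete)]
  exact tsub_le_tsub_left hbad 1

/-- Skewed-vector count-min bound (cf. Cormode–Muthukrishnan, Eqn 5.1): if `T`
contains the `k` largest entries of a nonnegative vector `y`, with tail weight
`t_k = ∑_{i' ∉ T} y i'`, and `w ≥ 3k`, `w ≥ e/η`, then for each coordinate `i`,
`ŷ_i ≤ y_i + η t_k` with probability at least `1 - (1/3 + 1/e)^d`. -/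
theorem cm_skewed_bound
    (n w d : ℕ) (hn : 0 < n) (hw : 0 < w) (hd : 0 < d)
    {Ω : Type*} [MeasureSpace Ω] [IsProbabilityMeasure (ℙ : Measure Ω)]
    (h : Fin d → Ω → Fin n → Fin w) (hmeas : ∀ j, Measurable (h j))
    (hindep : iIndepFun h ℙ)
    (hpair : ∀ (j : Fin d) (i i' : Fin n), i ≠ i' →
        ℙ {ω | h j ω i = h j ω i'} ≤ 1 / w)
    (y : Fin n → ℝ) (hy : ∀ i, 0 ≤ y i)
    (k : ℕ) (T : Finset (Fin n)) (hTcard : T.card ≤ k)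
    (hTtop : ∀ i ∈ T, ∀ i' ∉ T, y i' ≤ y i)
    (η : ℝ) (hη : 0 < η)
    (hw3k : 3 * k ≤ w) (hwη : Real.exp 1 / η ≤ w) (i : Fin n) :
    1 - ENNReal.ofReal ((1 / 3 + 1 / Real.exp 1) ^ d) ≤
      ℙ {ω | cmEstimate hd (fun j => h j ω) y i
              ≤ y i + η * ∑ i' ∈ Finset.univ.filter (fun i' => i' ∉ T), y i'} :=
  cm_skewed_bound_general n w d hd h hmeas hindep hpair y hy k T hTcard η hη hw3k hwη i
end

section
/- (Count-min bound for Zipf-like vectors; cf. Theorem 3 and its Corollary.) Fix positive integers n, w, d, a probability space Ω, and random hash functions h_1, …, h_d : Ω → (Fin n → Fin w) that are mutually independent, each pairwise uniform in the sense that for all distinct i, i', P(h_j(i) = h_j(i')) ≤ 1/w. Let y ∈ ℝ^n have nonnegative entries whose i-th largest value is at most C·i^{−z} for constants C > 0 and z > 1. Fix a positive integer k ≤ n, let T be a set of k coordinates containing the k largest entries of y, and let η > 0. Then the tail weight satisfies t_k = Σ_{i' ∉ T} y_{i'} ≤ C·k^{1−z}/(z−1), and if w ≥ 3k and w ≥ e/η,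 then for each coordinate i the count-min estimate ŷ_i = min_{1 ≤ j ≤ d} S(y)_{j, h_j(i)} satisfies P( ŷ_i ≤ y_i + η·C·k^{1−z}/(z−1) ) ≥ 1 − (1/3 + 1/e)^d. -/
open Finset MeasureTheory ProbabilityTheory
open scoped ENNReal

theorem Finset.sum_le_sum_of_card_eq_of_forall_le {α M : Type*} [AddCommMonoid M]
    [PartialOrder M] [IsOrderedAddMonoid M] {s t : Finset α} {f : α → M} (hcard : #s = #t)
    (hle : ∀ a ∈ s, ∀ b ∈ t, f a ≤ f b) : ∑ a ∈ s, f a ≤ ∑ b ∈ t, f b := by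
  let e : s ≃ t := equivOfCardEq hcard
  calc ∑ a ∈ s, f a = ∑ a : s, f a := (sum_coe_sort s f).symm
    _ ≤ ∑ a : s, f (e a) := sum_le_sum fun a _ => hle a a.2 (e a) (e a).2
    _ = ∑ b ∈ t, f b := (e.sum_comp fun b => f b).trans (sum_coe_sort t f)

theorem Finset.sum_compl_le_sum_compl_of_forall_le {α M : Type*} [Fintype α] [DecidableEq α]
    [AddCommGroup M] [PartialOrder M] [IsOrderedAddMonoid M] {s t : Finset α} {f : α → M}
    (hcard : #s = #t) (htop : ∀ a ∈ s, ∀ b ∉ s, f b ≤ f a) :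
    ∑ a ∈ sᶜ, f a ≤ ∑ b ∈ tᶜ, f b := by
  have hsdiff : #(t \ s) = #(s \ t) := by
    have := card_sdiff_add_card_inter t s
    have := card_sdiff_add_card_inter s t
    rw [inter_comm] at this
    omega
  have hts : ∑ b ∈ t, f b ≤ ∑ a ∈ s, f a := by
    rw [← sum_inter_add_sum_sdiff t s, ← sum_inter_add_sum_sdiff s t, inter_comm]
    exact add_le_add_right (sum_le_sum_of_card_eq_of_forall_le hsdiff fun b hb a ha =>
      htop a (mem_sdiff.1 ha).1 b (mem_sdiff.1 hb).2) _
  rw [eq_sub_of_add_eq (sum_compl_add_sum s f), eq_sub_of_add_eq (sum_compl_add_sum t f)]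
  exact sub_le_sub_left hts _

theorem sum_Ico_rpow_neg_le {z : ℝ} (hz : 1 < z) {k : ℕ} (hk : 0 < k) (N : ℕ) :
    ∑ m ∈ Ico k N, ((m : ℝ) + 1) ^ (-z) ≤ (k : ℝ) ^ (1 - z) / (z - 1) := by
  have hk1 : (1 : ℝ) ≤ k := by exact_mod_cast hk
  rcases le_or_gt N k with hNk | hkN
  · rw [Ico_eq_empty_of_le hNk, sum_empty]
    exact div_nonneg (Real.rpow_nonneg (by positivity) _) (by linarith)
  have hanti : AntitoneOn (fun x : ℝ => x ^ (-z)) (Set.Icc k N) := fun a ha b _ hab =>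
    Real.rpow_le_rpow_of_nonpos (by linarith [ha.1]) hab (by linarith)
  have hzero : (0 : ℝ) ∉ Set.uIcc (k : ℝ) N := by
    rw [Set.uIcc_of_le (by exact_mod_cast hkN.le)]
    exact fun h => by linarith [h.1]
  calc ∑ m ∈ Ico k N, ((m : ℝ) + 1) ^ (-z)
      ≤ ∫ x in (k : ℝ)..N, x ^ (-z) := by
        simpa using hanti.sum_le_integral_Ico (by exact_mod_cast hkN.le)
    _ = ((k : ℝ) ^ (1 - z) - (N : ℝ) ^ (1 - z)) / (z - 1) := by
        rw [integral_rpow (Or.inr ⟨by linarith, hzero⟩), neg_add_eq_sub,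
          ← neg_sub z 1, div_neg, ← neg_div, neg_sub]
    _ ≤ (k : ℝ) ^ (1 - z) / (z - 1) := by
        gcongr
        exact sub_le_self _ (Real.rpow_nonneg (by positivity) _)

theorem sum_compl_le_of_zipf {n : ℕ} {y : Fin n → ℝ} {C z : ℝ} (hC : 0 ≤ C) (hz : 1 < z)
    (σ : Equiv.Perm (Fin n))
    (hzipf : ∀ i : Fin n, y (σ i) ≤ C * (((i : ℕ) + 1 : ℝ)) ^ (-z))
    {k : ℕ} (hk : 0 < k) {T : Finset (Fin n)} (hTcard : #T = k)
    (hTtop : ∀ i ∈ T, ∀ i' ∉ T, y i' ≤ y i) :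
    ∑ i ∈ Tᶜ, y i ≤ C * (k : ℝ) ^ (1 - z) / (z - 1) := by
  set K : Finset (Fin n) := {m | (m : ℕ) < k}
  have hKcard : #(T.map σ.symm.toEmbedding) = #K := by
    rw [card_map, hTcard, Fin.card_filter_val_lt,
      min_eq_right (hTcard ▸ card_le_univ T |>.trans_eq (Fintype.card_fin n))]
  have hKc : Kᶜ.map Fin.valEmbedding = Ico k n := by
    ext a
    simp only [K, compl_filter, mem_map, mem_filter, mem_univ, true_and, mem_Ico, not_lt,
      Fin.valEmbedding_apply]
    exact ⟨by rintro ⟨m, hm, rfl⟩; omega, fun h => ⟨⟨a, h.2⟩, h.1, rfl⟩⟩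
  calc ∑ i ∈ Tᶜ, y i = ∑ m ∈ (T.map σ.symm.toEmbedding)ᶜ, y (σ m) :=
        sum_equiv σ.symm (by simp) (by simp)
    _ ≤ ∑ m ∈ Kᶜ, y (σ m) := by
        refine sum_compl_le_sum_compl_of_forall_le hKcard fun a ha b hb => ?_
        simp only [mem_map_equiv, Equiv.symm_symm] at ha hb
        exact hTtop _ ha _ hb
    _ ≤ ∑ m ∈ Kᶜ, C * (((m : ℕ) : ℝ) + 1) ^ (-z) := sum_le_sum fun m _ => hzipf m
    _ = C * ∑ m ∈ Ico k n, ((m : ℝ) + 1) ^ (-z) := by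
        rw [← mul_sum, ← hKc, sum_map]
        rfl
    _ ≤ C * (k : ℝ) ^ (1 - z) / (z - 1) := by
        rw [mul_div_assoc]
        exact mul_le_mul_of_nonneg_left (sum_Ico_rpow_neg_le hz hk n) hC

section Collisions

variable {α β Ω : Type*} [DecidableEq α] [MeasurableSpace Ω] {μ : Measure Ω}
  {g : Ω → α → β} {q : ℝ≥0∞}

theorem measure_exists_collision_le
    (hpair : ∀ i i', i ≠ i' → μ {ω | g ω i = g ω i'} ≤ q) (S : Finset α) (i : α) :
    μ {ω | ∃ i' ∈ S.erase i, g ω i' = g ω i} ≤ #S * q := by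
  calc μ {ω | ∃ i' ∈ S.erase i, g ω i' = g ω i}
      = μ (⋃ i' ∈ S.erase i, {ω | g ω i' = g ω i}) := by congr 1; ext; simp
    _ ≤ ∑ i' ∈ S.erase i, μ {ω | g ω i' = g ω i} := measure_biUnion_finset_le _ _
    _ ≤ #(S.erase i) * q := by
        rw [← nsmul_eq_mul]
        exact sum_le_card_nsmul _ _ _ fun i' hi' => hpair i' i (ne_of_mem_erase hi')
    _ ≤ #S * q := by gcongr; exact erase_subset i S

variable [DecidableEq β]

def collisionMass (g : α → β) (y : α → ℝ) (S : Finset α) (i : α) : ℝ :=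
  ∑ i' ∈ S.erase i with g i' = g i, y i'

def rowFailure [Fintype α] (T : Finset α) (y : α → ℝ) (i : α) (ε : ℝ) :
    Set (α → β) :=
  {g | (∃ i' ∈ T.erase i, g i' = g i) ∨ ε < collisionMass g y Tᶜ i}

variable [MeasurableSpace β] [MeasurableEq β]

theorem measure_lt_collisionMass_le (hg : Measurable g)
    (hpair : ∀ i i', i ≠ i' → μ {ω | g ω i = g ω i'} ≤ q) {y : α → ℝ}
    (hy : ∀ i, 0 ≤ y i) (S : Finset α) (i : α) {ε : ℝ} (hε : 0 < ε) :
    μ {ω | ε < collisionMass (g ω) y S i} ≤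
      ENNReal.ofReal (∑ i' ∈ S, y i') * q / ENNReal.ofReal ε := by
  set E : α → Set Ω := fun i' => {ω | g ω i' = g ω i}
  have hE : ∀ i', MeasurableSet (E i') := fun i' =>
    measurableSet_eq_fun ((measurable_pi_apply i').comp hg) ((measurable_pi_apply i).comp hg)
  set f : Ω → ℝ≥0∞ := fun ω =>
    ∑ i' ∈ S.erase i, (E i').indicator (fun _ => ENNReal.ofReal (y i')) ω
  have hf : Measurable f := Finset.measurable_sum _ fun i' _ => measurable_const.indicator (hE i')
  have hfmass : ∀ ω, f ω = ENNReal.ofReal (collisionMass (g ω) y S i) := fun ω => by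
    rw [collisionMass, ENNReal.ofReal_sum_of_nonneg fun i' _ => hy i', sum_filter]
    exact sum_congr rfl fun i' _ => by simp [E, Set.indicator_apply]
  have hlint : ∫⁻ ω, f ω ∂μ ≤ ENNReal.ofReal (∑ i' ∈ S, y i') * q := by
    calc ∫⁻ ω, f ω ∂μ = ∑ i' ∈ S.erase i, ENNReal.ofReal (y i') * μ (E i') := by
          rw [lintegral_finsetSum _ fun i' _ => measurable_const.indicator (hE i')]
          exact sum_congr rfl fun i' _ => lintegral_indicator_const (hE i') _
      _ ≤ ∑ i' ∈ S.erase i, ENNReal.ofReal (y i') * q :=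
          sum_le_sum fun i' hi' => by gcongr; exact hpair i' i (ne_of_mem_erase hi')
      _ ≤ ∑ i' ∈ S, ENNReal.ofReal (y i') * q := sum_le_sum_of_subset (erase_subset i S)
      _ = ENNReal.ofReal (∑ i' ∈ S, y i') * q := by
          rw [← sum_mul, ENNReal.ofReal_sum_of_nonneg fun i' _ => hy i']
  calc μ {ω | ε < collisionMass (g ω) y S i}
      ≤ μ {ω | ENNReal.ofReal ε ≤ f ω} :=
        measure_mono fun ω hω => by
          rw [Set.mem_ofPred_eq, hfmass]; exact ENNReal.ofReal_le_ofReal hω.le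
    _ ≤ (∫⁻ ω, f ω ∂μ) / ENNReal.ofReal ε :=
        meas_ge_le_lintegral_div hf.aemeasurable (by simpa using hε) ENNReal.ofReal_ne_top
    _ ≤ _ := ENNReal.div_le_div_right hlint _

theorem measure_preimage_rowFailure_le [Fintype α] (hg : Measurable g)
    (hpair : ∀ i i', i ≠ i' → μ {ω | g ω i = g ω i'} ≤ q)
    {y : α → ℝ} (hy : ∀ i, 0 ≤ y i) (T : Finset α) (i : α) {ε : ℝ} (hε : 0 < ε) :
    μ (g ⁻¹' rowFailure T y i ε) ≤
      #T * q + ENNReal.ofReal (∑ i' ∈ Tᶜ, y i') * q / ENNReal.ofReal ε :=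
  (measure_union_le _ _).trans <| add_le_add (measure_exists_collision_le hpair T i)
    (measure_lt_collisionMass_le hg hpair hy Tᶜ i hε)

end Collisions

theorem one_sub_pow_le_measure_iUnion_compl {ι Ω β : Type*} [Fintype ι] [MeasurableSpace Ω]
    [MeasurableSpace β] {μ : Measure Ω} [IsProbabilityMeasure μ] {X : ι → Ω → β}
    (hX : iIndepFun X μ) {F : Set β} (hF : MeasurableSet F) {p : ℝ≥0∞}
    (hp : ∀ j, μ (X j ⁻¹' F) ≤ p) :
    1 - p ^ Fintype.card ι ≤ μ (⋃ j, (X j ⁻¹' F)ᶜ) := by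
  have hinter : μ (⋂ j, X j ⁻¹' F) ≤ p ^ Fintype.card ι := by
    rw [hX.meas_iInter fun j => ⟨F, hF, rfl⟩, ← card_univ, ← prod_const]
    exact prod_le_prod' fun j _ => hp j
  rw [← Set.compl_iInter]
  calc 1 - p ^ Fintype.card ι ≤ 1 - μ (⋂ j, X j ⁻¹' F) := tsub_le_tsub_left hinter 1
    _ ≤ μ (⋂ j, X j ⁻¹' F)ᶜ :=
        tsub_le_iff_left.2 (measure_univ (μ := μ) ▸ measure_univ_le_add_compl _)

theorem cmSketch_le_of_notMem_rowFailure {n w d : ℕ} {h : Fin d → Fin n → Fin w}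
    {y : Fin n → ℝ} {T : Finset (Fin n)} {i : Fin n} {ε : ℝ} {j : Fin d}
    (hj : h j ∉ rowFailure T y i ε) : cmSketch h y j (h j i) ≤ y i + ε := by
  simp only [rowFailure, Set.mem_ofPred_eq, not_or, not_exists, not_and, not_lt] at hj
  obtain ⟨hheavy, hlight⟩ := hj
  have hcollide : (univ.filter fun i' => h j i' = h j i).erase i =
      (Tᶜ.erase i).filter fun i' => h j i' = h j i := by
    ext i'
    simp only [mem_erase, mem_filter, mem_univ, true_and, mem_compl]
    exact ⟨fun ⟨hne, heq⟩ =>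
      ⟨⟨hne, fun hT => hheavy i' (mem_erase.2 ⟨hne, hT⟩) heq⟩, heq⟩,
      fun ⟨⟨hne, _⟩, heq⟩ => ⟨hne, heq⟩⟩
  rw [cmSketch, ← add_sum_erase _ y (by simp : i ∈ univ.filter fun i' => h j i' = h j i),
    hcollide]
  exact add_le_add le_rfl hlight

theorem cmEstimate_le_of_notMem_rowFailure {n w d : ℕ} (hd : 0 < d)
    {h : Fin d → Fin n → Fin w} {y : Fin n → ℝ} {T : Finset (Fin n)} {i : Fin n} {ε : ℝ} {j : Fin d}
    (hj : h j ∉ rowFailure T y i ε) : cmEstimate hd h y i ≤ y i + ε :=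
  (inf'_le _ (mem_univ j)).trans (cmSketch_le_of_notMem_rowFailure hj)

theorem rowFailure_bound_le_third_add_inv_exp {w k : ℕ} (hw : 0 < w) (hw3k : 3 * k ≤ w)
    {S ε : ℝ} (hS : 0 ≤ S) (hε : 0 < ε) (hSε : Real.exp 1 * S ≤ w * ε) :
    (k : ℝ≥0∞) * (1 / w) + ENNReal.ofReal S * (1 / w) / ENNReal.ofReal ε ≤
      ENNReal.ofReal (1 / 3 + 1 / Real.exp 1) := by
  have hw' : (0 : ℝ) < w := by exact_mod_cast hw
  rw [mul_one_div, mul_one_div, ← ENNReal.ofReal_natCast, ← ENNReal.ofReal_natCast,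
    ← ENNReal.ofReal_div_of_pos hw', ← ENNReal.ofReal_div_of_pos hw',
    ← ENNReal.ofReal_div_of_pos hε,
    ← ENNReal.ofReal_add (by positivity) (by positivity)]
  refine ENNReal.ofReal_le_ofReal (add_le_add ?_ ?_)
  · rw [div_le_iff₀ hw']
    have : (3 * k : ℝ) ≤ w := by exact_mod_cast hw3k
    linarith
  · rw [div_div, div_le_div_iff₀ (by positivity) (Real.exp_pos 1)]
    linarith

theorem cm_zipf_bound_general
    (n w d : ℕ) (hw : 0 < w) (hd : 0 < d)
    {Ω : Type*} [MeasureSpace Ω] [IsProbabilityMeasure (ℙ : Measure Ω)]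
    (h : Fin d → Ω → Fin n → Fin w) (hmeas : ∀ j, Measurable (h j))
    (hindep : iIndepFun h ℙ)
    (hpair : ∀ (j : Fin d) (i i' : Fin n), i ≠ i' →
        ℙ {ω | h j ω i = h j ω i'} ≤ 1 / w)
    (y : Fin n → ℝ) (hy : ∀ i, 0 ≤ y i)
    (C z : ℝ) (hC : 0 < C) (hz : 1 < z)
    (σ : Equiv.Perm (Fin n))
    (hzipf : ∀ i : Fin n, y (σ i) ≤ C * (((i : ℕ) + 1 : ℝ)) ^ (-z))
    (k : ℕ) (hk : 0 < k)
    (T : Finset (Fin n)) (hTcard : T.card = k)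
    (hTtop : ∀ i ∈ T, ∀ i' ∉ T, y i' ≤ y i)
    (η : ℝ) (hη : 0 < η)
    (hw3k : 3 * k ≤ w) (hwη : Real.exp 1 / η ≤ w) :
    (∑ i' ∈ Finset.univ.filter (fun i' => i' ∉ T), y i')
        ≤ C * (k : ℝ) ^ (1 - z) / (z - 1) ∧
    ∀ i : Fin n,
      1 - ENNReal.ofReal ((1 / 3 + 1 / Real.exp 1) ^ d) ≤
        ℙ {ω | cmEstimate hd (fun j => h j ω) y i
                ≤ y i + η * (C * (k : ℝ) ^ (1 - z) / (z - 1))} := by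
  set B := C * (k : ℝ) ^ (1 - z) / (z - 1)
  have htail : ∑ i' ∈ Tᶜ, y i' ≤ B := sum_compl_le_of_zipf hC.le hz σ hzipf hk hTcard hTtop
  refine ⟨by simpa [compl_eq_univ_sdiff, filter_notMem_eq_sdiff] using htail, fun i => ?_⟩
  have hB : 0 < B := by have := sub_pos.2 hz; positivity
  have hexp : Real.exp 1 ≤ w * η := (div_le_iff₀ hη).1 hwη
  have hmarkov : Real.exp 1 * ∑ i' ∈ Tᶜ, y i' ≤ w * (η * B) := by
    rw [← mul_assoc]
    exact (mul_le_mul_of_nonneg_left htail (Real.exp_pos 1).le).trans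
      (mul_le_mul_of_nonneg_right hexp hB.le)
  have hrow : ∀ j, ℙ (h j ⁻¹' rowFailure T y i (η * B)) ≤
      ENNReal.ofReal (1 / 3 + 1 / Real.exp 1) := fun j =>
    (measure_preimage_rowFailure_le (hmeas j) (hpair j) hy T i (by positivity)).trans <|
      rowFailure_bound_le_third_add_inv_exp hw (hTcard ▸ hw3k) (sum_nonneg fun i' _ => hy i')
        (by positivity) hmarkov
  calc 1 - ENNReal.ofReal ((1 / 3 + 1 / Real.exp 1) ^ d)
      = 1 - ENNReal.ofReal (1 / 3 + 1 / Real.exp 1) ^ Fintype.card (Fin d) := by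
        rw [ENNReal.ofReal_pow (by positivity), Fintype.card_fin]
    _ ≤ ℙ (⋃ j, (h j ⁻¹' rowFailure T y i (η * B))ᶜ) :=
        one_sub_pow_le_measure_iUnion_compl hindep (Set.toFinite _).measurableSet hrow
    _ ≤ _ := measure_mono <| Set.iUnion_subset fun j ω hω =>
        cmEstimate_le_of_notMem_rowFailure (h := fun j => h j ω) hd hω

/-- Count-min bound for Zipf-like vectors: if the `i`-th largest entry of the
nonnegative vector `y` is at most `C i^{-z}` with `z > 1`, and `T` is a set of
`k` coordinates containing the `k` largest entries, then the tail weight is at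
most `C k^{1-z}/(z-1)`, and for `w ≥ 3k`, `w ≥ e/η`, each count-min estimate
satisfies `ŷ_i ≤ y_i + η C k^{1-z}/(z-1)` with probability at least
`1 - (1/3 + 1/e)^d`. -/
theorem cm_zipf_bound
    (n w d : ℕ) (hn : 0 < n) (hw : 0 < w) (hd : 0 < d)
    {Ω : Type*} [MeasureSpace Ω] [IsProbabilityMeasure (ℙ : Measure Ω)]
    (h : Fin d → Ω → Fin n → Fin w) (hmeas : ∀ j, Measurable (h j))
    (hindep : iIndepFun h ℙ)
    (hpair : ∀ (j : Fin d) (i i' : Fin n), i ≠ i' →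
        ℙ {ω | h j ω i = h j ω i'} ≤ 1 / w)
    (y : Fin n → ℝ) (hy : ∀ i, 0 ≤ y i)
    (C z : ℝ) (hC : 0 < C) (hz : 1 < z)
    (σ : Equiv.Perm (Fin n)) (hσ : Antitone (fun i => y (σ i)))
    (hzipf : ∀ i : Fin n, y (σ i) ≤ C * (((i : ℕ) + 1 : ℝ)) ^ (-z))
    (k : ℕ) (hk : 0 < k) (hkn : k ≤ n)
    (T : Finset (Fin n)) (hTcard : T.card = k)
    (hTtop : ∀ i ∈ T, ∀ i' ∉ T, y i' ≤ y i)
    (η : ℝ) (hη : 0 < η)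
    (hw3k : 3 * k ≤ w) (hwη : Real.exp 1 / η ≤ w) :
    (∑ i' ∈ Finset.univ.filter (fun i' => i' ∉ T), y i')
        ≤ C * (k : ℝ) ^ (1 - z) / (z - 1) ∧
    ∀ i : Fin n,
      1 - ENNReal.ofReal ((1 / 3 + 1 / Real.exp 1) ^ d) ≤
        ℙ {ω | cmEstimate hd (fun j => h j ω) y i
                ≤ y i + η * (C * (k : ℝ) ^ (1 - z) / (z - 1))} :=
  cm_zipf_bound_general n w d hw hd h hmeas hindep hpair y hy C z hC hz σ hzipf k hk T hTcard hTtop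
    η hη hw3k hwη
end
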